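/- In the two-group factor-model setup, suppose α₁ = α₂ = α and p₁(n)/p₂(n) → ∞. Then a_{1,p₁(n)} / a_{2,p₂(n)} → ∞ and, for every x > 0, P(Q_{p₁(n), p₂(n)} ≤ a_{1,p₁(n)} x) → Ψ_α(x) as n → ∞. (Proposition 2, Case 2, third subcase.) -/

import Mathlib

open MeasureTheory ProbabilityTheory Filter

noncomputable section

/-- The Fréchet distribution function with tail index `α`. -/
def frechetCDF (α x : ℝ) : ℝ := if 0 < x then Real.exp (-x ^ (-α)) else 0

/-- The norming constant `a_p = (Σ_{i<p} σ_i^α)^{1/α}`. -/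
def normConst (σ : ℕ → ℝ) (α : ℝ) (p : ℕ) : ℝ :=
  (∑ i ∈ Finset.range p, σ i ^ α) ^ (1 / α)

/-- Maximum of the first `p₁` variables of the first group and the first `p₂`
variables of the second group. -/
def Qmax {Ω : Type*} (X₁ X₂ : ℕ → Ω → ℝ) (p₁ p₂ : ℕ) (ω : Ω) : ℝ :=
  max (⨆ i : Fin p₁, X₁ i ω) (⨆ j : Fin p₂, X₂ j ω)

/-- Codomains of the family consisting of the factor `Z` and the two noise arrays. -/
def mixCodom (d : ℕ) : Unit ⊕ ℕ ⊕ ℕ → Type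
  | Sum.inl _ => Fin d → ℝ
  | Sum.inr _ => ℝ

instance mixCodomMeasurableSpace (d : ℕ) : ∀ i, MeasurableSpace (mixCodom d i)
  | Sum.inl _ => inferInstanceAs (MeasurableSpace (Fin d → ℝ))
  | Sum.inr (Sum.inl _) => inferInstanceAs (MeasurableSpace ℝ)
  | Sum.inr (Sum.inr _) => inferInstanceAs (MeasurableSpace ℝ)

/-- The family consisting of the factor `Z` and the two noise arrays. -/
def mixFun {Ω : Type*} {d : ℕ} (Z : Ω → Fin d → ℝ) (ε₁ ε₂ : ℕ → Ω → ℝ) :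
    ∀ i : Unit ⊕ ℕ ⊕ ℕ, Ω → mixCodom d i
  | Sum.inl _ => Z
  | Sum.inr (Sum.inl i) => ε₁ i
  | Sum.inr (Sum.inr j) => ε₂ j

/-!
Conditionally on the factor `Z` the noises are independent, so `P(Q ≤ a x | Z)` is the product
`∏ᵢ (1 - F̄₁((a x - fᵢ(Z))/σᵢ)) ∏ⱼ (1 - F̄₂((a x - f̃ⱼ(Z))/σ̃ⱼ))`, with `F̄ₖ(u) = P(εₖ > u)`,
evaluated at thresholds that tend to `∞` uniformly in the index, the shifts `fᵢ(Z)` being bounded.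
By the tail assumption each factor is `1 - σᵢ^α (a x)^{-α} (1 + o(1))` uniformly, hence the first
product tends to `exp(-(Σ σᵢ^α) (a x)^{-α}) = exp(-x^{-α})` and the second one to `1`, because
`(a₂/a₁)^α → 0` (both `a_{k,p}` are of order `p^{1/α}` and `p₁/p₂ → ∞`). Dominated convergence
removes the conditioning.
-/
open Topology Finset Function

section UniformLimits

variable {ι κ : Type*} {l : Filter κ} {s : κ → Finset ι}

theorem eventually_forall_of_eventually_prod_top {p : κ × ι → Prop}
    (h : ∀ᶠ x in l ×ˢ ⊤, p x) : ∀ᶠ n in l, ∀ i, p (n, i) := by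
  simpa [← principal_univ, eventually_prod_principal_iff] using h

theorem tendsto_sum_mul_of_tendsto_uncurry {w r : κ → ι → ℝ} {L : ℝ}
    (hw : ∀ᶠ n in l, ∀ i ∈ s n, 0 ≤ w n i)
    (hsum : Tendsto (fun n => ∑ i ∈ s n, w n i) l (𝓝 L))
    (hr : Tendsto ↿r (l ×ˢ ⊤) (𝓝 1)) :
    Tendsto (fun n => ∑ i ∈ s n, w n i * r n i) l (𝓝 L) := by
  suffices h : Tendsto (fun n => ∑ i ∈ s n, w n i * (r n i - 1)) l (𝓝 0) by
    simpa [mul_sub, sum_sub_distrib] using (h.add hsum)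
  rw [Metric.tendsto_nhds]
  intro ε hε
  have hK : 0 < |L| + 1 := by positivity
  filter_upwards [hw, hsum.eventually (gt_mem_nhds (by linarith [le_abs_self L] : L < |L| + 1)),
    eventually_forall_of_eventually_prod_top
      (hr.eventually (Metric.ball_mem_nhds 1 (div_pos hε hK)))] with n hwn hsumn hrn
  rw [Real.dist_eq, sub_zero]
  calc |∑ i ∈ s n, w n i * (r n i - 1)|
      ≤ ∑ i ∈ s n, w n i * (ε / (|L| + 1)) := by
        refine (abs_sum_le_sum_abs _ _).trans (sum_le_sum fun i hi => ?_)
        rw [abs_mul, abs_of_nonneg (hwn i hi)]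
        exact mul_le_mul_of_nonneg_left (Real.dist_eq _ _ ▸ hrn i).le (hwn i hi)
    _ = (∑ i ∈ s n, w n i) * (ε / (|L| + 1)) := by rw [sum_mul]
    _ < (|L| + 1) * (ε / (|L| + 1)) := by gcongr
    _ = ε := by field_simp

theorem tendsto_prod_one_sub_of_tendsto_uncurry {q : κ → ι → ℝ} {S : ℝ}
    (hq₀ : ∀ n i, 0 ≤ q n i) (hq : Tendsto ↿q (l ×ˢ ⊤) (𝓝 0))
    (hsum : Tendsto (fun n => ∑ i ∈ s n, q n i) l (𝓝 S)) :
    Tendsto (fun n => ∏ i ∈ s n, (1 - q n i)) l (𝓝 (Real.exp (-S))) := by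
  -- `φ t = -log (1 - t) / t`, extended by its limit `1` at `0`
  set φ := dslope (fun t => -Real.log (1 - t)) 0
  have hderiv : HasDerivAt (fun t => -Real.log (1 - t)) 1 0 := by
    simpa using (((hasDerivAt_id (0 : ℝ)).const_sub 1).log (by norm_num)).fun_neg
  have hφ : Tendsto φ (𝓝 0) (𝓝 1) := by
    have := (continuousAt_dslope_same.2 hderiv.differentiableAt).tendsto
    rwa [dslope_same, hderiv.deriv] at this
  have hlog : ∀ t, t * φ t = -Real.log (1 - t) := fun t => by
    simpa using sub_smul_dslope (fun t => -Real.log (1 - t)) 0 t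
  have hlim := (Real.continuous_exp.tendsto _).comp
    (tendsto_sum_mul_of_tendsto_uncurry (r := fun n i => φ (q n i))
      (Eventually.of_forall fun n i _ => hq₀ n i) hsum (hφ.comp hq)).neg
  refine hlim.congr' ?_
  filter_upwards [eventually_forall_of_eventually_prod_top
    (hq.eventually (eventually_lt_nhds one_pos))] with n hn
  simp only [comp_apply, hlog, sum_neg_distrib, neg_neg, Real.exp_sum]
  exact prod_congr rfl fun i _ => Real.exp_log (sub_pos.2 (hn i))

end UniformLimits

theorem abs_prod_one_sub_le_one {ι : Type*} {s : Finset ι} {q : ι → ℝ}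
    (hq : ∀ i ∈ s, q i ∈ Set.Icc 0 1) : |∏ i ∈ s, (1 - q i)| ≤ 1 := by
  rw [abs_prod]
  exact prod_le_one (fun _ _ => abs_nonneg _) fun i hi =>
    abs_le.2 ⟨by linarith [(hq i hi).2], by linarith [(hq i hi).1]⟩

section Tail

variable {ι κ : Type*} {l : Filter κ} {c : κ → ℝ} {d σ : ι → ℝ} {M C : ℝ}

theorem tendsto_uncurry_sub_div_atTop (hc : Tendsto c l atTop) (hd : ∀ i, |d i| ≤ M)
    (hC : 0 < C) (hσ : ∀ i, σ i ∈ Set.Ioc 0 C) :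
    Tendsto (fun x : κ × ι => (c x.1 - d x.2) / σ x.2) (l ×ˢ ⊤) atTop := by
  have hc' : Tendsto (fun x : κ × ι => c x.1) (l ×ˢ ⊤) atTop := hc.comp tendsto_fst
  refine tendsto_atTop_mono' _ ?_ ((tendsto_atTop_add_const_right _ (-M) hc').atTop_div_const hC)
  filter_upwards [hc'.eventually_ge_atTop M] with x hx
  obtain ⟨hσ₀, hσC⟩ := hσ x.2
  calc (c x.1 + -M) / C ≤ (c x.1 - M) / σ x.2 :=
        div_le_div_of_nonneg_left (by linarith) hσ₀ hσC
    _ ≤ (c x.1 - d x.2) / σ x.2 :=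
        div_le_div_of_nonneg_right (by linarith [(abs_le.1 (hd x.2)).2]) hσ₀.le

theorem tendsto_uncurry_div_nhds_zero (hc : Tendsto c l atTop) (hd : ∀ i, |d i| ≤ M) :
    Tendsto (fun x : κ × ι => d x.2 / c x.1) (l ×ˢ ⊤) (𝓝 0) := by
  have hc' : Tendsto (fun x : κ × ι => c x.1) (l ×ˢ ⊤) atTop := hc.comp tendsto_fst
  refine squeeze_zero_norm' ?_ (tendsto_const_nhds.div_atTop hc' (a := M))
  filter_upwards [hc'.eventually_gt_atTop 0] with x hx
  rw [Real.norm_eq_abs, abs_div, abs_of_pos hx]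
  exact div_le_div_of_nonneg_right (hd x.2) hx.le

theorem rpow_mul_rpow_neg_mul_sub_div {α c d σ y : ℝ} (hσ : 0 < σ) (hc : 0 < c)
    (hcd : 0 < c - d) :
    σ ^ α * c ^ (-α) * (((c - d) / σ) ^ α * y * (1 - d / c) ^ (-α)) = y := by
  rw [show 1 - d / c = (c - d) / c by field_simp, Real.div_rpow hcd.le hσ.le,
    Real.rpow_neg (div_pos hcd hc).le, Real.div_rpow hcd.le hc.le, Real.rpow_neg hc.le]
  have := Real.rpow_pos_of_pos hσ α
  have := Real.rpow_pos_of_pos hc α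
  have := Real.rpow_pos_of_pos hcd α
  field_simp

variable {G : ℝ → ℝ} {α L : ℝ} {s : κ → Finset ι}

theorem tendsto_zero_of_rpow_mul_tendsto_one (hα : 0 < α)
    (hG : Tendsto (fun u => u ^ α * G u) atTop (𝓝 1)) : Tendsto G atTop (𝓝 0) := by
  have h := hG.mul (tendsto_rpow_neg_atTop hα)
  rw [mul_zero] at h
  refine h.congr' ?_
  filter_upwards [eventually_gt_atTop 0] with u hu
  rw [Real.rpow_neg hu.le]
  have := Real.rpow_pos_of_pos hu α
  field_simp

theorem tendsto_sum_sub_div_of_rpow_mul_tendsto_one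
    (hG : Tendsto (fun u => u ^ α * G u) atTop (𝓝 1))
    (hc : Tendsto c l atTop) (hd : ∀ i, |d i| ≤ M) (hC : 0 < C) (hσ : ∀ i, σ i ∈ Set.Ioc 0 C)
    (hL : Tendsto (fun n => (∑ i ∈ s n, σ i ^ α) * c n ^ (-α)) l (𝓝 L)) :
    Tendsto (fun n => ∑ i ∈ s n, G ((c n - d i) / σ i)) l (𝓝 L) := by
  have hpow : Tendsto (fun t : ℝ => (1 - t) ^ (-α)) (𝓝 0) (𝓝 1) := by
    have : ContinuousAt (fun t : ℝ => (1 - t) ^ (-α)) 0 :=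
      (continuousAt_const.sub continuousAt_id).rpow_const (Or.inl (by norm_num))
    simpa using this.tendsto
  -- `G (u) = σ^α c^{-α} · (u^α G u) · (1 - d/c)^{-α}` for `u = (c - d)/σ`
  have hratio := (hG.comp (tendsto_uncurry_sub_div_atTop hc hd hC hσ)).mul
    (hpow.comp (tendsto_uncurry_div_nhds_zero hc hd))
  rw [mul_one] at hratio
  have hpos := hc.eventually_gt_atTop (max M 0)
  refine (tendsto_sum_mul_of_tendsto_uncurry
    (w := fun n i => σ i ^ α * c n ^ (-α))
    (r := fun n i => ((c n - d i) / σ i) ^ α * G ((c n - d i) / σ i) * (1 - d i / c n) ^ (-α))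
    ?_ (by simpa [sum_mul] using hL) hratio).congr' ?_
  · filter_upwards [hpos] with n hn i _
    have := (hσ i).1
    have : 0 < c n := (le_max_right _ _).trans_lt hn
    positivity
  · filter_upwards [hpos] with n hn
    refine sum_congr rfl fun i _ => rpow_mul_rpow_neg_mul_sub_div (hσ i).1
      ((le_max_right _ _).trans_lt hn) ?_
    linarith [(abs_le.1 (hd i)).2, (le_max_left M 0).trans_lt hn]

theorem tendsto_prod_one_sub_sub_div_of_rpow_mul_tendsto_one (hα : 0 < α) (hG₀ : ∀ u, 0 ≤ G u)
    (hG : Tendsto (fun u => u ^ α * G u) atTop (𝓝 1))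
    (hc : Tendsto c l atTop) (hd : ∀ i, |d i| ≤ M) (hC : 0 < C) (hσ : ∀ i, σ i ∈ Set.Ioc 0 C)
    (hL : Tendsto (fun n => (∑ i ∈ s n, σ i ^ α) * c n ^ (-α)) l (𝓝 L)) :
    Tendsto (fun n => ∏ i ∈ s n, (1 - G ((c n - d i) / σ i))) l (𝓝 (Real.exp (-L))) :=
  tendsto_prod_one_sub_of_tendsto_uncurry (fun _ _ => hG₀ _)
    ((tendsto_zero_of_rpow_mul_tendsto_one hα hG).comp
      (tendsto_uncurry_sub_div_atTop hc hd hC hσ))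
    (tendsto_sum_sub_div_of_rpow_mul_tendsto_one hG hc hd hC hσ hL)

end Tail

section NormConst

variable {σ τ : ℕ → ℝ} {α : ℝ}

theorem normConst_nonneg (hσ : ∀ i, 0 ≤ σ i) (p : ℕ) : 0 ≤ normConst σ α p :=
  Real.rpow_nonneg (sum_nonneg fun i _ => Real.rpow_nonneg (hσ i) α) _

theorem normConst_pos (hσ : ∀ i, 0 < σ i) {p : ℕ} (hp : 0 < p) : 0 < normConst σ α p :=
  Real.rpow_pos_of_pos
    (sum_pos (fun i _ => Real.rpow_pos_of_pos (hσ i) α) (nonempty_range_iff.2 hp.ne')) _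

theorem normConst_rpow (hσ : ∀ i, 0 ≤ σ i) (hα : α ≠ 0) (p : ℕ) :
    normConst σ α p ^ α = ∑ i ∈ range p, σ i ^ α := by
  rw [normConst, ← Real.rpow_mul (sum_nonneg fun i _ => Real.rpow_nonneg (hσ i) α), one_div,
    inv_mul_cancel₀ hα, Real.rpow_one]

theorem normConst_div_rpow (hσ : ∀ i, 0 ≤ σ i) (hα : α ≠ 0) {c : ℝ} (hc : 0 ≤ c) (p : ℕ) :
    (normConst σ α p / c) ^ α = (∑ i ∈ range p, σ i ^ α) * c ^ (-α) := by
  rw [Real.div_rpow (normConst_nonneg hσ p) hc, normConst_rpow hσ hα, Real.rpow_neg hc,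
    div_eq_mul_inv]

theorem normConst_const {c : ℝ} (hc : 0 ≤ c) (hα : α ≠ 0) (p : ℕ) :
    normConst (fun _ => c) α p = (p : ℝ) ^ (1 / α) * c := by
  rw [normConst, sum_const, card_range, nsmul_eq_mul,
    Real.mul_rpow (Nat.cast_nonneg _) (Real.rpow_nonneg hc _), ← Real.rpow_mul hc,
    mul_one_div_cancel hα, Real.rpow_one]

theorem normConst_mono (hα : 0 < α) (hσ : ∀ i, 0 ≤ σ i) (hστ : ∀ i, σ i ≤ τ i) (p : ℕ) :
    normConst σ α p ≤ normConst τ α p :=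
  Real.rpow_le_rpow (sum_nonneg fun i _ => Real.rpow_nonneg (hσ i) α)
    (sum_le_sum fun i _ => Real.rpow_le_rpow (hσ i) (hστ i) hα.le) (by positivity)

variable {C₁ C₂ : ℝ}

theorem rpow_mul_le_normConst (hα : 0 < α) (hC₁ : 0 ≤ C₁) (hσ : ∀ i, C₁ ≤ σ i) (p : ℕ) :
    (p : ℝ) ^ (1 / α) * C₁ ≤ normConst σ α p :=
  normConst_const hC₁ hα.ne' p ▸ normConst_mono hα (fun _ => hC₁) hσ p

theorem normConst_le_rpow_mul (hα : 0 < α) (hσ : ∀ i, σ i ∈ Set.Icc 0 C₂) (p : ℕ) :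
    normConst σ α p ≤ (p : ℝ) ^ (1 / α) * C₂ :=
  normConst_const ((hσ 0).1.trans (hσ 0).2) hα.ne' p ▸
    normConst_mono hα (fun i => (hσ i).1) (fun i => (hσ i).2) p

variable {κ : Type*} {l : Filter κ}

theorem tendsto_normConst_atTop (hα : 0 < α) (hC₁ : 0 < C₁) (hσ : ∀ i, C₁ ≤ σ i) {p : κ → ℕ}
    (hp : Tendsto (fun n => (p n : ℝ)) l atTop) :
    Tendsto (fun n => normConst σ α (p n)) l atTop :=
  tendsto_atTop_mono (fun n => rpow_mul_le_normConst hα hC₁.le hσ (p n))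
    (((tendsto_rpow_atTop (one_div_pos.2 hα)).comp hp).atTop_mul_const hC₁)

theorem tendsto_normConst_div_normConst_atTop (hα : 0 < α) (hC₁ : 0 < C₁)
    (hσ : ∀ i, C₁ ≤ σ i) (hτ : ∀ i, τ i ∈ Set.Ioc 0 C₂) {p q : κ → ℕ} (hq : ∀ n, 0 < q n)
    (hpq : Tendsto (fun n => (p n : ℝ) / q n) l atTop) :
    Tendsto (fun n => normConst σ α (p n) / normConst τ α (q n)) l atTop := by
  have hC₂ : 0 < C₂ := (hτ 0).1.trans_le (hτ 0).2
  refine tendsto_atTop_mono (fun n => ?_)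
    (((tendsto_rpow_atTop (one_div_pos.2 hα)).comp hpq).const_mul_atTop (div_pos hC₁ hC₂))
  calc C₁ / C₂ * ((p n : ℝ) / q n) ^ (1 / α)
      = ((p n : ℝ) ^ (1 / α) * C₁) / ((q n : ℝ) ^ (1 / α) * C₂) := by
        rw [Real.div_rpow (Nat.cast_nonneg _) (Nat.cast_nonneg _)]
        ring
    _ ≤ normConst σ α (p n) / normConst τ α (q n) :=
        have ha := rpow_mul_le_normConst hα hC₁.le hσ (p n)
        div_le_div₀ ((by positivity : (0 : ℝ) ≤ _).trans ha) ha
          (normConst_pos (fun i => (hτ i).1) (hq n))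
          (normConst_le_rpow_mul hα (fun i => ⟨(hτ i).1.le, (hτ i).2⟩) _)

end NormConst

theorem tendsto_prod_mul_prod_frechetCDF {σ τ : ℕ → ℝ} {α C x M₁ M₂ : ℝ} {G₁ G₂ : ℝ → ℝ}
    {d₁ d₂ : ℕ → ℝ} {p q : ℕ → ℕ} (hα : 0 < α) (hx : 0 < x)
    (hσ : ∀ i, σ i ∈ Set.Ioc 0 C) (hτ : ∀ j, τ j ∈ Set.Ioc 0 C)
    (hG₁₀ : ∀ u, 0 ≤ G₁ u) (hG₁ : Tendsto (fun u => u ^ α * G₁ u) atTop (𝓝 1))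
    (hG₂₀ : ∀ u, 0 ≤ G₂ u) (hG₂ : Tendsto (fun u => u ^ α * G₂ u) atTop (𝓝 1))
    (hd₁ : ∀ i, |d₁ i| ≤ M₁) (hd₂ : ∀ j, |d₂ j| ≤ M₂)
    (ha : Tendsto (fun n => normConst σ α (p n)) atTop atTop)
    (hab : Tendsto (fun n => normConst σ α (p n) / normConst τ α (q n)) atTop atTop) :
    Tendsto (fun n => (∏ i ∈ range (p n), (1 - G₁ ((normConst σ α (p n) * x - d₁ i) / σ i))) *
      ∏ j ∈ range (q n), (1 - G₂ ((normConst σ α (p n) * x - d₂ j) / τ j)))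
      atTop (𝓝 (frechetCDF α x)) := by
  set a := fun n => normConst σ α (p n)
  have hC : 0 < C := (hσ 0).1.trans_le (hσ 0).2
  have hax : Tendsto (fun n => a n * x) atTop atTop := ha.atTop_mul_const hx
  have hσ₀ : ∀ i, 0 ≤ σ i := fun i => (hσ i).1.le
  have hτ₀ : ∀ j, 0 ≤ τ j := fun j => (hτ j).1.le
  have hL₁ : Tendsto (fun n => (∑ i ∈ range (p n), σ i ^ α) * (a n * x) ^ (-α)) atTop
      (𝓝 (x ^ (-α))) := by
    refine tendsto_const_nhds.congr' ?_
    filter_upwards [ha.eventually_gt_atTop 0] with n hn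
    rw [← normConst_div_rpow hσ₀ hα.ne' (by positivity), div_mul_cancel_left₀ hn.ne',
      Real.inv_rpow hx.le, Real.rpow_neg hx.le]
  have hL₂ : Tendsto (fun n => (∑ j ∈ range (q n), τ j ^ α) * (a n * x) ^ (-α)) atTop (𝓝 0) := by
    have hba : Tendsto (fun n => normConst τ α (q n) / (a n * x)) atTop (𝓝 0) := by
      have h := hab.inv_tendsto_atTop.mul_const x⁻¹
      rw [zero_mul] at h
      refine h.congr fun n => ?_
      rw [Pi.inv_apply, inv_div, div_mul_eq_div_div, div_eq_mul_inv (_ / _)]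
    have h := hba.rpow_const (Or.inr hα.le)
    rw [Real.zero_rpow hα.ne'] at h
    refine h.congr' ?_
    filter_upwards [hax.eventually_ge_atTop 0] with n hn
    exact normConst_div_rpow hτ₀ hα.ne' hn _
  have h := (tendsto_prod_one_sub_sub_div_of_rpow_mul_tendsto_one hα hG₁₀ hG₁ hax hd₁ hC hσ
    hL₁).mul (tendsto_prod_one_sub_sub_div_of_rpow_mul_tendsto_one hα hG₂₀ hG₂ hax hd₂ hC hτ hL₂)
  simpa [frechetCDF, hx] using h

section Independence

variable {Ω : Type*} [MeasurableSpace Ω] {μ : Measure Ω}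

theorem ProbabilityTheory.IndepFun.measure_preimage_prodMk_eq_lintegral {β γ : Type*}
    [MeasurableSpace β] [MeasurableSpace γ] [IsFiniteMeasure μ] {X : Ω → β} {Y : Ω → γ}
    (hXY : IndepFun X Y μ) (hX : Measurable X) (hY : Measurable Y) {B : Set (β × γ)}
    (hB : MeasurableSet B) :
    μ ((fun ω => (X ω, Y ω)) ⁻¹' B) = ∫⁻ ω, μ.map Y (Prod.mk (X ω) ⁻¹' B) ∂μ := by
  rw [← Measure.map_apply (hX.prodMk hY) hB,
    (indepFun_iff_map_prod_eq_prod_map_map hX.aemeasurable hY.aemeasurable).1 hXY,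
    Measure.prod_apply hB, lintegral_map (measurable_measure_prodMk_left hB) hX]

theorem ProbabilityTheory.iIndepFun.measureReal_forall_mem_eq_integral_prod
    [IsProbabilityMeasure μ] {ι : Type*} {β : ι → Type*} [∀ i, MeasurableSpace (β i)]
    {Y : ∀ i, Ω → β i} (hY : iIndepFun Y μ) (hYm : ∀ i, Measurable (Y i)) {i₀ : ι}
    {s : Finset ι} (hs : i₀ ∉ s) {D : ∀ i, Set (β i₀ × β i)} (hD : ∀ i, MeasurableSet (D i)) :
    μ.real {ω | ∀ i ∈ s, (Y i₀ ω, Y i ω) ∈ D i} =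
      ∫ ω, ∏ i ∈ s, μ.real {ω' | (Y i₀ ω, Y i ω') ∈ D i} ∂μ := by
  set W : Ω → ∀ i : s, β i := fun ω i => Y i ω
  have hW : Measurable W := measurable_pi_lambda _ fun i => hYm i
  have hindep : IndepFun (Y i₀) W μ :=
    (hY.indepFun_finset {i₀} s (disjoint_singleton_left.2 hs) hYm).comp
      (measurable_pi_apply (⟨i₀, mem_singleton_self i₀⟩ : ({i₀} : Finset ι))) measurable_id
  set B : Set (β i₀ × ∀ i : s, β i) := {x | ∀ i : s, (x.1, x.2 i) ∈ D i}
  have hB : MeasurableSet B := by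
    simp only [B, Set.ofPred_forall]
    exact MeasurableSet.iInter fun i =>
      (measurable_fst.prodMk ((measurable_pi_apply i).comp measurable_snd)) (hD i)
  have hfactor (x : β i₀) :
      μ.map W (Prod.mk x ⁻¹' B) = ∏ i ∈ s, μ {ω' | (x, Y i ω') ∈ D i} := by
    have hpre : W ⁻¹' (Prod.mk x ⁻¹' B) = ⋂ i ∈ s, Y i ⁻¹' (Prod.mk x ⁻¹' D i) := by
      ext; simp [W, B]
    rw [Measure.map_apply hW (measurable_prodMk_left hB), hpre,
      hY.measure_inter_preimage_eq_mul s (fun i _ => measurable_prodMk_left (hD i))]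
    rfl
  calc μ.real {ω | ∀ i ∈ s, (Y i₀ ω, Y i ω) ∈ D i}
      = (μ ((fun ω => (Y i₀ ω, W ω)) ⁻¹' B)).toReal := by
        rw [measureReal_def]
        congr 2
        ext
        simp [W, B]
    _ = (∫⁻ ω, μ.map W (Prod.mk (Y i₀ ω) ⁻¹' B) ∂μ).toReal := by
        rw [hindep.measure_preimage_prodMk_eq_lintegral (hYm i₀) hW hB]
    _ = ∫ ω, (μ.map W (Prod.mk (Y i₀ ω) ⁻¹' B)).toReal ∂μ :=
        (integral_toReal ((measurable_measure_prodMk_left hB).comp (hYm i₀)).aemeasurable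
          (ae_of_all _ fun _ => measure_lt_top _ _)).symm
    _ = ∫ ω, ∏ i ∈ s, μ.real {ω' | (Y i₀ ω, Y i ω') ∈ D i} ∂μ := by
        simp_rw [hfactor, ENNReal.toReal_prod]
        rfl

end Independence

section Survival

variable {Ω : Type*} [MeasurableSpace Ω] {P : Measure Ω}

def survivalFun (P : Measure Ω) (ε : Ω → ℝ) (u : ℝ) : ℝ := P.real {ω | u < ε ω}

theorem survivalFun_nonneg (ε : Ω → ℝ) (u : ℝ) : 0 ≤ survivalFun P ε u := measureReal_nonneg

theorem survivalFun_le_one [IsProbabilityMeasure P] (ε : Ω → ℝ) (u : ℝ) :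
    survivalFun P ε u ≤ 1 :=
  measureReal_le_one

theorem measurable_survivalFun [IsFiniteMeasure P] (ε : Ω → ℝ) :
    Measurable (survivalFun P ε) :=
  Antitone.measurable fun _ _ huv => measureReal_mono fun _ hω => huv.trans_lt hω

theorem ProbabilityTheory.IdentDistrib.measureReal_le_eq_one_sub_survivalFun
    [IsProbabilityMeasure P] {ε ε' : Ω → ℝ} (h : IdentDistrib ε ε' P P) (hε' : Measurable ε')
    (u : ℝ) : P.real {ω | ε ω ≤ u} = 1 - survivalFun P ε' u := by
  have hle : {ω | ε' ω ≤ u} = {ω | u < ε' ω}ᶜ := by ext; simp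
  rw [show {ω | ε ω ≤ u} = ε ⁻¹' Set.Iic u from rfl, measureReal_def,
    h.measure_mem_eq measurableSet_Iic, ← measureReal_def, show ε' ⁻¹' Set.Iic u = _ from hle,
    probReal_compl_eq_one_sub (measurableSet_lt measurable_const hε'), survivalFun]

end Survival

theorem Qmax_le_iff {Ω : Type*} {X₁ X₂ : ℕ → Ω → ℝ} {p q : ℕ} (hp : 0 < p) (hq : 0 < q)
    {ω : Ω} {t : ℝ} :
    Qmax X₁ X₂ p q ω ≤ t ↔ (∀ i < p, X₁ i ω ≤ t) ∧ ∀ j < q, X₂ j ω ≤ t := by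
  have : Nonempty (Fin p) := ⟨⟨0, hp⟩⟩
  have : Nonempty (Fin q) := ⟨⟨0, hq⟩⟩
  simp only [Qmax, max_le_iff, ciSup_le_iff (Set.finite_range _).bddAbove, Fin.forall_iff]

section Factorization

variable {Ω : Type*} [MeasurableSpace Ω] {P : Measure Ω} [IsProbabilityMeasure P] {d : ℕ}
  {Z : Ω → Fin d → ℝ} {f g : ℕ → (Fin d → ℝ) → ℝ} {σ σt : ℕ → ℝ} {ε₁ ε₂ X₁ X₂ : ℕ → Ω → ℝ}

theorem measureReal_Qmax_le_eq_integral (hZm : Measurable Z) (hfm : ∀ i, Measurable (f i))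
    (hgm : ∀ j, Measurable (g j)) (hσ : ∀ i, 0 < σ i) (hσt : ∀ j, 0 < σt j)
    (hε₁m : ∀ i, Measurable (ε₁ i)) (hε₂m : ∀ j, Measurable (ε₂ j))
    (hid₁ : ∀ i, IdentDistrib (ε₁ i) (ε₁ 0) P P) (hid₂ : ∀ j, IdentDistrib (ε₂ j) (ε₂ 0) P P)
    (hindep : iIndepFun (m := fun i => mixCodomMeasurableSpace d i) (mixFun Z ε₁ ε₂) P)
    (hX₁ : ∀ i ω, X₁ i ω = f i (Z ω) + σ i * ε₁ i ω)
    (hX₂ : ∀ j ω, X₂ j ω = g j (Z ω) + σt j * ε₂ j ω)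
    {p q : ℕ} (hp : 0 < p) (hq : 0 < q) (t : ℝ) :
    P.real {ω | Qmax X₁ X₂ p q ω ≤ t} =
      ∫ ω, (∏ i ∈ range p, (1 - survivalFun P (ε₁ 0) ((t - f i (Z ω)) / σ i))) *
        ∏ j ∈ range q, (1 - survivalFun P (ε₂ 0) ((t - g j (Z ω)) / σt j)) ∂P := by
  -- conditionally on `Z`, the event `Q ≤ t` asks every noise to stay below a threshold
  let D : ∀ k, Set (mixCodom d (Sum.inl ()) × mixCodom d k)
    | Sum.inl _ => Set.univ
    | Sum.inr (Sum.inl i) => {x : (Fin d → ℝ) × ℝ | x.2 ≤ (t - f i x.1) / σ i}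
    | Sum.inr (Sum.inr j) => {x : (Fin d → ℝ) × ℝ | x.2 ≤ (t - g j x.1) / σt j}
  have hD : ∀ k, MeasurableSet (D k) := by
    -- the ascriptions let the measurable structures of `mixCodom` unfold to those of `ℝ`
    rintro (_ | i | j)
    · exact MeasurableSet.univ
    · exact (measurableSet_le measurable_snd
        ((measurable_const.sub ((hfm i).comp measurable_fst)).div_const _) :
          MeasurableSet {x : (Fin d → ℝ) × ℝ | x.2 ≤ (t - f i x.1) / σ i})
    · exact (measurableSet_le measurable_snd
        ((measurable_const.sub ((hgm j).comp measurable_fst)).div_const _) :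
          MeasurableSet {x : (Fin d → ℝ) × ℝ | x.2 ≤ (t - g j x.1) / σt j})
  have hmeas : ∀ k, Measurable (mixFun Z ε₁ ε₂ k) := by
    rintro (_ | i | j)
    exacts [hZm, hε₁m i, hε₂m j]
  set s := ((range p).disjSum (range q)).map (Embedding.inr : ℕ ⊕ ℕ ↪ Unit ⊕ ℕ ⊕ ℕ)
  have hevent : {ω | Qmax X₁ X₂ p q ω ≤ t} =
      {ω | ∀ k ∈ s, (mixFun Z ε₁ ε₂ (Sum.inl ()) ω, mixFun Z ε₁ ε₂ k ω) ∈ D k} := by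
    ext ω
    simp only [Set.mem_ofPred_eq, Qmax_le_iff hp hq, s, forall_mem_map, Sum.forall,
      inl_mem_disjSum, inr_mem_disjSum, mem_range, hX₁, hX₂]
    exact and_congr
      (forall₂_congr fun i _ => le_sub_iff_add_le'.symm.trans (le_div_iff₀' (hσ i)).symm)
      (forall₂_congr fun j _ => le_sub_iff_add_le'.symm.trans (le_div_iff₀' (hσt j)).symm)
  rw [hevent, hindep.measureReal_forall_mem_eq_integral_prod hmeas (i₀ := Sum.inl ())
    (by simp [s]) hD]
  refine integral_congr_ae (ae_of_all _ fun ω => ?_)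
  dsimp only [s]
  rw [prod_map, prod_disjSum]
  congr 1 <;> refine prod_congr rfl fun i _ => ?_
  · exact (hid₁ i).measureReal_le_eq_one_sub_survivalFun (hε₁m 0) ((t - f i (Z ω)) / σ i)
  · exact (hid₂ i).measureReal_le_eq_one_sub_survivalFun (hε₂m 0) ((t - g i (Z ω)) / σt i)

end Factorization

theorem prop2_case2_sub3_general
    {Ω : Type*} [MeasurableSpace Ω] (P : Measure Ω) [IsProbabilityMeasure P]
    (d : ℕ) (Z : Ω → Fin d → ℝ) (hZm : Measurable Z)
    (f g : ℕ → (Fin d → ℝ) → ℝ) (hfm : ∀ i, Measurable (f i)) (hgm : ∀ j, Measurable (g j))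
    (hfbdd : ∀ᵐ ω ∂P, ∃ M : ℝ, ∀ i, |f i (Z ω)| ≤ M)
    (hgbdd : ∀ᵐ ω ∂P, ∃ M : ℝ, ∀ j, |g j (Z ω)| ≤ M)
    (C₁ C₂ : ℝ) (hC₁ : 0 < C₁)
    (σ σt : ℕ → ℝ) (hσ : ∀ i, σ i ∈ Set.Icc C₁ C₂) (hσt : ∀ j, σt j ∈ Set.Icc C₁ C₂)
    (α₁ α₂ : ℝ) (hα₁ : 0 < α₁)
    (ε₁ ε₂ : ℕ → Ω → ℝ) (hε₁m : ∀ i, Measurable (ε₁ i)) (hε₂m : ∀ j, Measurable (ε₂ j))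
    (hid₁ : ∀ i, IdentDistrib (ε₁ i) (ε₁ 0) P P)
    (hid₂ : ∀ j, IdentDistrib (ε₂ j) (ε₂ 0) P P)
    (hindep : iIndepFun (m := fun i => mixCodomMeasurableSpace d i) (mixFun Z ε₁ ε₂) P)
    (htail₁ : Tendsto (fun x : ℝ => x ^ α₁ * (P {ω | x < ε₁ 0 ω}).toReal) atTop (nhds 1))
    (htail₂ : Tendsto (fun x : ℝ => x ^ α₂ * (P {ω | x < ε₂ 0 ω}).toReal) atTop (nhds 1))
    (X₁ X₂ : ℕ → Ω → ℝ)
    (hX₁ : ∀ i ω, X₁ i ω = f i (Z ω) + σ i * ε₁ i ω)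
    (hX₂ : ∀ j ω, X₂ j ω = g j (Z ω) + σt j * ε₂ j ω)
    (p₁ p₂ : ℕ → ℕ) (hp₁pos : ∀ n, 0 < p₁ n) (hp₂pos : ∀ n, 0 < p₂ n)
    (hp₁ : Tendsto (fun n => (p₁ n : ℝ)) atTop atTop)
    (α : ℝ) (hα₁α : α₁ = α) (hα₂α : α₂ = α)
    (hratio : Tendsto (fun n => (p₁ n : ℝ) / (p₂ n : ℝ)) atTop atTop) :
    Tendsto (fun n => normConst σ α₁ (p₁ n) / normConst σt α₂ (p₂ n)) atTop atTop ∧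
    ∀ x : ℝ, 0 < x →
      Tendsto (fun n => (P {ω | Qmax X₁ X₂ (p₁ n) (p₂ n) ω ≤ normConst σ α₁ (p₁ n) * x}).toReal) atTop (nhds (frechetCDF α x)) := by
  subst α₁ α₂
  have hσ' : ∀ i, σ i ∈ Set.Ioc 0 C₂ := fun i => ⟨hC₁.trans_le (hσ i).1, (hσ i).2⟩
  have hσt' : ∀ j, σt j ∈ Set.Ioc 0 C₂ := fun j => ⟨hC₁.trans_le (hσt j).1, (hσt j).2⟩
  have hab :=
    tendsto_normConst_div_normConst_atTop hα₁ hC₁ (fun i => (hσ i).1) hσt' hp₂pos hratio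
  refine ⟨hab, fun x hx => ?_⟩
  refine Tendsto.congr (fun n => (measureReal_Qmax_le_eq_integral hZm hfm hgm
    (fun i => (hσ' i).1) (fun j => (hσt' j).1) hε₁m hε₂m hid₁ hid₂ hindep hX₁ hX₂ (hp₁pos n)
    (hp₂pos n) _).symm) ?_
  have hsurv : ∀ ε u, survivalFun P ε u ∈ Set.Icc 0 1 :=
    fun ε u => ⟨survivalFun_nonneg _ _, survivalFun_le_one _ _⟩
  have hmeas₁ := measurable_survivalFun (P := P) (ε₁ 0)
  have hmeas₂ := measurable_survivalFun (P := P) (ε₂ 0)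
  rw [show frechetCDF α x = ∫ _, frechetCDF α x ∂P by simp]
  refine tendsto_integral_of_dominated_convergence (fun _ => 1)
    (fun n => Measurable.aestronglyMeasurable (by fun_prop)) (integrable_const 1)
    (fun n => ae_of_all _ fun ω => ?_) ?_
  · rw [norm_mul]
    exact mul_le_one₀ (abs_prod_one_sub_le_one fun i _ => hsurv _ _) (norm_nonneg _)
      (abs_prod_one_sub_le_one fun i _ => hsurv _ _)
  · filter_upwards [hfbdd, hgbdd] with ω ⟨M₁, hM₁⟩ ⟨M₂, hM₂⟩
    exact tendsto_prod_mul_prod_frechetCDF hα₁ hx hσ' hσt'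
      (survivalFun_nonneg _) htail₁ (survivalFun_nonneg _) htail₂ hM₁ hM₂
      (tendsto_normConst_atTop hα₁ hC₁ (fun i => (hσ i).1) hp₁) hab

/-- Prop. 2, Case 2, third subcase: `α₁ = α₂ = α` and `p₁/p₂ → ∞` imply `a₁/a₂ → ∞` and `P(Q ≤ a₁ x) → Ψ_α(x)` for all `x > 0`. -/
theorem prop2_case2_sub3
    {Ω : Type*} [MeasurableSpace Ω] (P : Measure Ω) [IsProbabilityMeasure P]
    (d : ℕ) (Z : Ω → Fin d → ℝ) (hZm : Measurable Z)
    (f g : ℕ → (Fin d → ℝ) → ℝ) (hfm : ∀ i, Measurable (f i)) (hgm : ∀ j, Measurable (g j))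
    (hfbdd : ∀ᵐ ω ∂P, ∃ M : ℝ, ∀ i, |f i (Z ω)| ≤ M)
    (hgbdd : ∀ᵐ ω ∂P, ∃ M : ℝ, ∀ j, |g j (Z ω)| ≤ M)
    (C₁ C₂ : ℝ) (hC₁ : 0 < C₁) (hC₁₂ : C₁ ≤ C₂)
    (σ σt : ℕ → ℝ) (hσ : ∀ i, σ i ∈ Set.Icc C₁ C₂) (hσt : ∀ j, σt j ∈ Set.Icc C₁ C₂)
    (α₁ α₂ : ℝ) (hα₁ : 0 < α₁) (hα₂ : 0 < α₂)
    (ε₁ ε₂ : ℕ → Ω → ℝ) (hε₁m : ∀ i, Measurable (ε₁ i)) (hε₂m : ∀ j, Measurable (ε₂ j))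
    (hid₁ : ∀ i, IdentDistrib (ε₁ i) (ε₁ 0) P P)
    (hid₂ : ∀ j, IdentDistrib (ε₂ j) (ε₂ 0) P P)
    (hindep : iIndepFun (m := fun i => mixCodomMeasurableSpace d i) (mixFun Z ε₁ ε₂) P)
    (htail₁ : Tendsto (fun x : ℝ => x ^ α₁ * (P {ω | x < ε₁ 0 ω}).toReal) atTop (nhds 1))
    (htail₂ : Tendsto (fun x : ℝ => x ^ α₂ * (P {ω | x < ε₂ 0 ω}).toReal) atTop (nhds 1))
    (X₁ X₂ : ℕ → Ω → ℝ)
    (hX₁ : ∀ i ω, X₁ i ω = f i (Z ω) + σ i * ε₁ i ω)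
    (hX₂ : ∀ j ω, X₂ j ω = g j (Z ω) + σt j * ε₂ j ω)
    (p₁ p₂ : ℕ → ℕ) (hp₁pos : ∀ n, 0 < p₁ n) (hp₂pos : ∀ n, 0 < p₂ n)
    (hp₁ : Tendsto (fun n => (p₁ n : ℝ)) atTop atTop)
    (hp₂ : Tendsto (fun n => (p₂ n : ℝ)) atTop atTop)
    (α : ℝ) (hα₁α : α₁ = α) (hα₂α : α₂ = α)
    (hratio : Tendsto (fun n => (p₁ n : ℝ) / (p₂ n : ℝ)) atTop atTop) :
    Tendsto (fun n => normConst σ α₁ (p₁ n) / normConst σt α₂ (p₂ n)) atTop atTop ∧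
    ∀ x : ℝ, 0 < x →
      Tendsto (fun n => (P {ω | Qmax X₁ X₂ (p₁ n) (p₂ n) ω ≤ normConst σ α₁ (p₁ n) * x}).toReal) atTop (nhds (frechetCDF α x)) :=
  prop2_case2_sub3_general P d Z hZm f g hfm hgm hfbdd hgbdd C₁ C₂ hC₁ σ σt hσ hσt α₁ α₂ hα₁ ε₁ ε₂
    hε₁m hε₂m hid₁ hid₂ hindep htail₁ htail₂ X₁ X₂ hX₁ hX₂ p₁ p₂ hp₁pos hp₂pos hp₁ α hα₁α hα₂α
    hratio
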